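/- For a positive integer m, nonzero real λ, real x, and n ≥ 0, m^n·Bel_{n,λ/m}(x/m) = ∑_{k=0}^{n} C(n,k)·(−1)^{n−k}·⟨1⟩_{n−k,λ}·D_{m,λ}(k,x), where Bel_{n,μ} is the degenerate Bell polynomial with parameter μ and D_{m,λ} the degenerate Dowling polynomial. -/
import Mathlib

open Finset

noncomputable def dff (lam x : ℝ) (n : ℕ) : ℝ := ∏ i ∈ Finset.range n, (x - i * lam)

noncomputable def drf (lam x : ℝ) (n : ℕ) : ℝ := ∏ i ∈ Finset.range n, (x + i * lam)

lemma dff_succ (lam x : ℝ) (n : ℕ) : dff lam x (n+1) = dff lam x n * (x - n * lam) := by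
  simp [dff, Finset.prod_range_succ]

lemma drf_succ (lam x : ℝ) (n : ℕ) : drf lam x (n+1) = drf lam x n * (x + n * lam) := by
  simp [drf, Finset.prod_range_succ]

lemma e_eq (lam : ℝ) (j : ℕ) : dff lam (-1) j = (-1:ℝ)^j * drf lam 1 j := by
  induction j with
  | zero => simp [dff, drf]
  | succ j ih => rw [dff_succ, drf_succ, ih, pow_succ]; ring

lemma lemA (n : ℕ) (c : ℕ → ℝ)
    (h : ∀ y : ℝ, ∑ k ∈ Finset.range (n+1), c k * dff 1 y k = 0) :
    ∀ t, t ≤ n → c t = 0 := by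
  intro t
  induction t using Nat.strong_induction_on with
  | _ t ih =>
    intro ht
    have h0 := h t
    have hz : ∀ k ∈ Finset.range (n+1), k ≠ t → c k * dff 1 (t:ℝ) k = 0 := by
      intro k hk hkt
      rcases lt_or_gt_of_ne hkt with hlt | hgt
      · rw [ih k hlt (le_trans hlt.le ht)]; ring
      · have : dff 1 (t:ℝ) k = 0 := by
          apply Finset.prod_eq_zero (Finset.mem_range.mpr hgt)
          simp
        rw [this]; ring
    rw [Finset.sum_eq_single_of_mem t (Finset.mem_range.mpr (Nat.lt_succ_of_le ht)) hz] at h0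
    have hpos : (0:ℝ) < dff 1 (t:ℝ) t := by
      apply Finset.prod_pos
      intro i hi
      have h1 : (i:ℝ) < t := by exact_mod_cast Finset.mem_range.mp hi
      simp only [mul_one, sub_pos]
      exact h1
    exact (mul_eq_zero.mp h0).resolve_right (ne_of_gt hpos)

lemma lemB (m : ℕ) (hm : 1 ≤ m) (lam y : ℝ) (n : ℕ) :
    (m:ℝ)^n * dff (lam/m) y n = dff lam ((m:ℝ)*y) n := by
  have hm0 : (m:ℝ) ≠ 0 := Nat.cast_ne_zero.mpr (by omega)
  unfold dff
  rw [show (m:ℝ)^n = ∏ _i ∈ Finset.range n, (m:ℝ) by simp, ← Finset.prod_mul_distrib]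
  apply Finset.prod_congr rfl
  intro i _
  field_simp

lemma lemC (lam z : ℝ) (n : ℕ) :
    dff lam z n = ∑ k ∈ Finset.range (n+1),
      (n.choose k : ℝ) * dff lam (-1) (n-k) * dff lam (z+1) k := by
  induction n with
  | zero => simp [dff]
  | succ n ih =>
    rw [dff_succ, ih, Finset.sum_mul]
    have h1 : ∀ k ∈ Finset.range (n+1),
        (n.choose k : ℝ) * dff lam (-1) (n-k) * dff lam (z+1) k * (z - n*lam)
        = (n.choose k : ℝ) * dff lam (-1) (n-k) * dff lam (z+1) (k+1)
          + (n.choose k : ℝ) * dff lam (-1) (n-k+1) * dff lam (z+1) k := by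
      intro k hk
      have hk' : k ≤ n := Nat.lt_succ_iff.mp (Finset.mem_range.mp hk)
      have hcast : ((n - k : ℕ) : ℝ) = (n:ℝ) - k := by
        push_cast [Nat.cast_sub hk']; ring
      rw [dff_succ lam (z+1) k, dff_succ lam (-1) (n-k), hcast]
      ring
    rw [Finset.sum_congr rfl h1, Finset.sum_add_distrib]
    have hR : ∑ k ∈ Finset.range (n+2),
        ((n+1).choose k : ℝ) * dff lam (-1) (n+1-k) * dff lam (z+1) k
        = (∑ k ∈ Finset.range (n+1),
            ((n.choose k : ℝ) + (n.choose (k+1) : ℝ)) * dff lam (-1) (n-k) * dff lam (z+1) (k+1))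
          + dff lam (-1) (n+1) := by
      rw [Finset.sum_range_succ']
      congr 1
      · apply Finset.sum_congr rfl
        intro k hk
        have : (n+1).choose (k+1) = n.choose k + n.choose (k+1) := Nat.choose_succ_succ n k
        rw [this]
        push_cast
        norm_num
      · simp [dff]
    rw [hR]
    have hB : ∑ k ∈ Finset.range (n+1),
        (n.choose k : ℝ) * dff lam (-1) (n-k+1) * dff lam (z+1) k
        = (∑ k ∈ Finset.range (n+1),
            (n.choose (k+1) : ℝ) * dff lam (-1) (n-k) * dff lam (z+1) (k+1))
          + dff lam (-1) (n+1) := by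
      rw [Finset.sum_range_succ']
      rw [Finset.sum_range_succ (fun k => (n.choose (k+1) : ℝ) * dff lam (-1) (n-k) * dff lam (z+1) (k+1))]
      simp only [Nat.choose_succ_self, Nat.cast_zero, zero_mul, add_zero]
      congr 1
      · apply Finset.sum_congr rfl
        intro k hk
        have hk' : k < n := Finset.mem_range.mp hk
        have : n - (k+1) + 1 = n - k := by omega
        rw [this]
      · simp [dff, Nat.sub_zero]
    rw [hB]
    have := Finset.sum_add_distrib (s := Finset.range (n+1))
      (f := fun k => (n.choose k : ℝ) * dff lam (-1) (n-k) * dff lam (z+1) (k+1))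
      (g := fun k => (n.choose (k+1) : ℝ) * dff lam (-1) (n-k) * dff lam (z+1) (k+1))
    rw [← add_assoc, ← this]
    congr 1
    apply Finset.sum_congr rfl
    intro k _
    ring

lemma swap_sum (n : ℕ) (G : ℕ → ℕ → ℝ) :
    ∑ j ∈ Finset.range (n+1), ∑ k ∈ Finset.range (j+1), G j k
    = ∑ k ∈ Finset.range (n+1), ∑ j ∈ Finset.range (n+1), (if k ≤ j then G j k else 0) := by
  rw [Finset.sum_comm]
  apply Finset.sum_congr rfl
  intro j hj
  have hj' : j ≤ n := Nat.lt_succ_iff.mp (Finset.mem_range.mp hj)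
  rw [← Finset.sum_filter]
  congr 1
  ext k
  simp [Nat.lt_succ_iff]
  omega

theorem stmt16 (m : ℕ) (hm : 1 ≤ m) (lam : ℝ) (hlam : lam ≠ 0) (x : ℝ)
    (W S2m : ℕ → ℕ → ℝ)
    (hW : ∀ (y : ℝ) (n : ℕ), dff lam ((m : ℝ) * y + 1) n =
      ∑ k ∈ Finset.range (n + 1), W n k * (m : ℝ) ^ k * dff 1 y k)
    (hS2m : ∀ (y : ℝ) (n : ℕ), dff (lam / m) y n =
      ∑ k ∈ Finset.range (n + 1), S2m n k * dff 1 y k)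
    (n : ℕ) :
    (m : ℝ) ^ n * ∑ k ∈ Finset.range (n + 1), S2m n k * (x / m) ^ k =
      ∑ k ∈ Finset.range (n + 1), (Nat.choose n k : ℝ) * (-1 : ℝ) ^ (n - k) *
        drf lam 1 (n - k) * ∑ j ∈ Finset.range (k + 1), W k j * x ^ j := by
  have hm0 : (m:ℝ) ≠ 0 := Nat.cast_ne_zero.mpr (by omega)
  set F : ℕ → ℕ → ℝ := fun j k =>
    (n.choose j : ℝ) * (-1:ℝ)^(n-j) * drf lam 1 (n-j) * (W j k * (m:ℝ)^k) with hF
  have key : ∀ y : ℝ,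
      ∑ k ∈ Finset.range (n+1),
        ((m:ℝ)^n * S2m n k - ∑ j ∈ Finset.range (n+1), (if k ≤ j then F j k else 0))
          * dff 1 y k = 0 := by
    intro y
    have e1 : (m:ℝ)^n * ∑ k ∈ Finset.range (n+1), S2m n k * dff 1 y k
        = ∑ j ∈ Finset.range (n+1), ∑ k ∈ Finset.range (j+1), F j k * dff 1 y k := by
      rw [← hS2m y n, lemB m hm lam y n, lemC lam ((m:ℝ)*y) n]
      apply Finset.sum_congr rfl
      intro j _
      rw [e_eq lam (n-j), hW y j, Finset.mul_sum]
      apply Finset.sum_congr rfl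
      intro k _
      simp only [hF]
      ring
    have e2 : ∑ j ∈ Finset.range (n+1), ∑ k ∈ Finset.range (j+1), F j k * dff 1 y k
        = ∑ k ∈ Finset.range (n+1),
            (∑ j ∈ Finset.range (n+1), (if k ≤ j then F j k else 0)) * dff 1 y k := by
      rw [swap_sum n (fun j k => F j k * dff 1 y k)]
      apply Finset.sum_congr rfl
      intro k _
      rw [Finset.sum_mul]
      apply Finset.sum_congr rfl
      intro j _
      split_ifs <;> simp
    have e3 : ∑ k ∈ Finset.range (n+1), ((m:ℝ)^n * S2m n k) * dff 1 y k
        = (m:ℝ)^n * ∑ k ∈ Finset.range (n+1), S2m n k * dff 1 y k := by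
      rw [Finset.mul_sum]
      apply Finset.sum_congr rfl
      intro k _
      ring
    simp only [sub_mul, Finset.sum_sub_distrib]
    rw [e3, e1, e2]
    ring
  have cEq : ∀ k, k ≤ n → (m:ℝ)^n * S2m n k
      = ∑ j ∈ Finset.range (n+1), (if k ≤ j then F j k else 0) := by
    intro k hk
    have := lemA n _ key k hk
    linarith [this]
  rw [Finset.mul_sum]
  have L : ∀ k ∈ Finset.range (n+1), (m:ℝ)^n * (S2m n k * (x/m)^k)
      = ∑ j ∈ Finset.range (n+1),
          (if k ≤ j then (n.choose j : ℝ) * (-1:ℝ)^(n-j) * drf lam 1 (n-j) * (W j k * x^k)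
           else 0) := by
    intro k hk
    have hk' : k ≤ n := Nat.lt_succ_iff.mp (Finset.mem_range.mp hk)
    have h1 : (m:ℝ)^n * (S2m n k * (x/m)^k)
        = ((m:ℝ)^n * S2m n k) * (x/m)^k := by ring
    rw [h1, cEq k hk', Finset.sum_mul]
    apply Finset.sum_congr rfl
    intro j _
    split_ifs
    · simp only [hF]
      rw [div_pow]
      field_simp
    · ring
  rw [Finset.sum_congr rfl L]
  have R : ∀ j ∈ Finset.range (n+1),
      (n.choose j : ℝ) * (-1:ℝ)^(n-j) * drf lam 1 (n-j)
        * ∑ k ∈ Finset.range (j+1), W j k * x^k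
      = ∑ k ∈ Finset.range (j+1),
          (n.choose j : ℝ) * (-1:ℝ)^(n-j) * drf lam 1 (n-j) * (W j k * x^k) :=
    fun j _ => Finset.mul_sum _ _ _
  rw [Finset.sum_congr rfl R,
    swap_sum n (fun j k => (n.choose j : ℝ) * (-1:ℝ)^(n-j) * drf lam 1 (n-j) * (W j k * x^k))]
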